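/- Let W_1, …, W_L be nonzero real matrices whose harmonic mean of the ratios ‖W_i‖_F / ‖W_i‖_σ is at most √2 · (B/√2)^{k/L} · √((L+1)/L) for some B > 0 and 1 ≤ k < L. Then there exists an index l such that for all ε > 0, rank_ε(W_l) ≤ (2/ε²) · (B/√2)^{2k/L} · ((L+1)/L) · ‖W_l‖_σ². -/

import Mathlib

/-! The squared singular values sum to `‖W‖_F²`, so at most `‖W‖_F² / ε²` of them exceed `ε`.
Some layer has `‖W_l‖_F / ‖W_l‖_σ` at most the harmonic mean of these ratios, hence at most the
assumed bound `C`, and then `rank_ε(W_l) ≤ C² ‖W_l‖_σ² / ε²`, which is the claim since `C²`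
is the constant on the right. -/

noncomputable def singularValues {m n : ℕ} (A : Matrix (Fin m) (Fin n) ℝ) : Fin n → ℝ :=
  fun i => Real.sqrt ((Matrix.isHermitian_conjTranspose_mul_self A).eigenvalues i)

noncomputable def epsRank {m n : ℕ} (A : Matrix (Fin m) (Fin n) ℝ) (ε : ℝ) : ℕ :=
  (Finset.univ.filter (fun i => ε < singularValues A i)).card

noncomputable def frobNorm {m n : ℕ} (A : Matrix (Fin m) (Fin n) ℝ) : ℝ :=
  Real.sqrt (∑ i, ∑ j, (A i j) ^ 2)

noncomputable def opNorm {m n : ℕ} (A : Matrix (Fin m) (Fin n) ℝ) : ℝ :=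
  ⨆ i, singularValues A i

theorem exists_le_card_div_sum_inv {ι : Type*} [Fintype ι] [Nonempty ι] (f : ι → ℝ)
    (hf : ∀ i, 0 < f i) : ∃ i, f i ≤ Fintype.card ι / ∑ j, (f j)⁻¹ := by
  obtain ⟨i, -, hmin⟩ := Finset.exists_min_image Finset.univ f Finset.univ_nonempty
  refine ⟨i, ?_⟩
  have hsum_pos : 0 < ∑ j, (f j)⁻¹ := Finset.sum_pos (fun j _ => inv_pos.2 (hf j)) Finset.univ_nonempty
  have hsum_le : ∑ j, (f j)⁻¹ ≤ Fintype.card ι * (f i)⁻¹ := by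
    calc ∑ j, (f j)⁻¹ ≤ ∑ _j : ι, (f i)⁻¹ :=
          Finset.sum_le_sum fun j hj => inv_anti₀ (hf i) (hmin j hj)
      _ = Fintype.card ι * (f i)⁻¹ := by simp
  rw [le_div_iff₀ hsum_pos]
  calc f i * ∑ j, (f j)⁻¹ ≤ f i * (Fintype.card ι * (f i)⁻¹) :=
        mul_le_mul_of_nonneg_left hsum_le (hf i).le
    _ = Fintype.card ι := by field_simp [(hf i).ne']

section SingularValues

variable {m n : ℕ} (A : Matrix (Fin m) (Fin n) ℝ)

theorem singularValues_nonneg (i : Fin n) : 0 ≤ singularValues A i :=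
  Real.sqrt_nonneg _

theorem singularValues_le_opNorm (i : Fin n) : singularValues A i ≤ opNorm A :=
  le_ciSup (Set.finite_range _).bddAbove i

theorem sum_singularValues_sq : ∑ i, singularValues A i ^ 2 = ∑ i, ∑ j, A i j ^ 2 := by
  have hA := Matrix.isHermitian_conjTranspose_mul_self A
  calc ∑ i, singularValues A i ^ 2 = ∑ i, hA.eigenvalues i :=
        Finset.sum_congr rfl fun i _ =>
          Real.sq_sqrt (Matrix.eigenvalues_conjTranspose_mul_self_nonneg A i)
    _ = (A.conjTranspose * A).trace := by simpa using hA.trace_eq_sum_eigenvalues.symm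
    _ = ∑ i, ∑ j, A i j ^ 2 := by
        simp only [Matrix.trace, Matrix.diag, Matrix.mul_apply, Matrix.conjTranspose_apply,
          star_trivial, sq]
        exact Finset.sum_comm

theorem frobNorm_sq : frobNorm A ^ 2 = ∑ i, singularValues A i ^ 2 := by
  rw [frobNorm, sum_singularValues_sq, Real.sq_sqrt (by positivity)]

variable {A}

theorem frobNorm_pos (hA : A ≠ 0) : 0 < frobNorm A := by
  obtain ⟨i, j, hij⟩ : ∃ i j, A i j ≠ 0 := by
    by_contra! h
    exact hA (Matrix.ext h)
  have hij_sq : 0 < A i j ^ 2 := by positivity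
  exact Real.sqrt_pos.2 <| Finset.sum_pos' (fun _ _ => by positivity)
    ⟨i, Finset.mem_univ _, Finset.sum_pos' (fun _ _ => sq_nonneg _) ⟨j, Finset.mem_univ _, hij_sq⟩⟩

theorem opNorm_pos (hA : A ≠ 0) : 0 < opNorm A := by
  by_contra! hop
  have hzero : ∀ i, singularValues A i = 0 := fun i =>
    le_antisymm ((singularValues_le_opNorm A i).trans hop) (singularValues_nonneg A i)
  have hfrob : frobNorm A ^ 2 = 0 := by simp [frobNorm_sq, hzero]
  exact (pow_pos (frobNorm_pos hA) 2).ne' hfrob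

theorem sq_mul_epsRank_le_frobNorm_sq {ε : ℝ} (hε : 0 ≤ ε) :
    ε ^ 2 * epsRank A ε ≤ frobNorm A ^ 2 := by
  rw [frobNorm_sq, epsRank, mul_comm, ← nsmul_eq_mul, ← Finset.sum_const]
  calc ∑ _i ∈ Finset.univ.filter (fun i => ε < singularValues A i), ε ^ 2
      ≤ ∑ i ∈ Finset.univ.filter (fun i => ε < singularValues A i), singularValues A i ^ 2 :=
        Finset.sum_le_sum fun i hi => pow_le_pow_left₀ hε (Finset.mem_filter.1 hi).2.le 2
    _ ≤ ∑ i, singularValues A i ^ 2 :=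
        Finset.sum_le_sum_of_subset_of_nonneg (Finset.filter_subset _ _)
          fun _ _ _ => sq_nonneg _

theorem epsRank_le_of_frobNorm_le {C ε : ℝ} (hε : 0 < ε) (hC : frobNorm A ≤ C * opNorm A) :
    (epsRank A ε : ℝ) ≤ C ^ 2 * opNorm A ^ 2 / ε ^ 2 := by
  rw [le_div_iff₀ (by positivity), mul_comm, ← mul_pow]
  exact (sq_mul_epsRank_le_frobNorm_sq hε.le).trans
    (pow_le_pow_left₀ (Real.sqrt_nonneg _) hC 2)

end SingularValues

theorem exists_bottleneck_layer_class_general {L k : ℕ} (hkL : k < L)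
    (m n : Fin L → ℕ) (W : (i : Fin L) → Matrix (Fin (m i)) (Fin (n i)) ℝ)
    (hW : ∀ i, W i ≠ 0) (B : ℝ) (hB : 0 < B)
    (hHM : (L : ℝ) / (∑ i, (frobNorm (W i) / opNorm (W i))⁻¹) ≤
      Real.sqrt 2 * Real.rpow (B / Real.sqrt 2) ((k : ℝ) / (L : ℝ)) *
        Real.sqrt (((L : ℝ) + 1) / (L : ℝ))) :
    ∃ l, ∀ ε : ℝ, 0 < ε →
      (epsRank (W l) ε : ℝ) ≤
        (2 / ε ^ 2) * Real.rpow (B / Real.sqrt 2) ((2 * k : ℝ) / (L : ℝ)) *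
          (((L : ℝ) + 1) / (L : ℝ)) * opNorm (W l) ^ 2 := by
  have : Nonempty (Fin L) := Fin.pos_iff_nonempty.1 (k.zero_le.trans_lt hkL)
  obtain ⟨l, hl⟩ := exists_le_card_div_sum_inv (fun i => frobNorm (W i) / opNorm (W i))
    fun i => div_pos (frobNorm_pos (hW i)) (opNorm_pos (hW i))
  rw [Fintype.card_fin] at hl
  refine ⟨l, fun ε hε => ?_⟩
  have hfrob := (div_le_iff₀ (opNorm_pos (hW l))).1 (hl.trans hHM)
  have hBs : 0 ≤ B / Real.sqrt 2 := by positivity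
  have hC : (Real.sqrt 2 * Real.rpow (B / Real.sqrt 2) ((k : ℝ) / (L : ℝ)) *
      Real.sqrt (((L : ℝ) + 1) / (L : ℝ))) ^ 2 =
      2 * Real.rpow (B / Real.sqrt 2) ((2 * k : ℝ) / (L : ℝ)) * (((L : ℝ) + 1) / (L : ℝ)) := by
    simp only [Real.rpow_eq_pow]
    rw [mul_pow, mul_pow, Real.sq_sqrt zero_le_two, Real.sq_sqrt (by positivity),
      ← Real.rpow_mul_natCast hBs]
    congr 3
    push_cast
    ring
  calc (epsRank (W l) ε : ℝ) ≤ _ := epsRank_le_of_frobNorm_le hε hfrob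
    _ = _ := by rw [hC]; ring

theorem exists_bottleneck_layer_class {L k : ℕ} (hk : 1 ≤ k) (hkL : k < L)
    (m n : Fin L → ℕ) (W : (i : Fin L) → Matrix (Fin (m i)) (Fin (n i)) ℝ)
    (hW : ∀ i, W i ≠ 0) (B : ℝ) (hB : 0 < B)
    (hHM : (L : ℝ) / (∑ i, (frobNorm (W i) / opNorm (W i))⁻¹) ≤
      Real.sqrt 2 * Real.rpow (B / Real.sqrt 2) ((k : ℝ) / (L : ℝ)) *
        Real.sqrt (((L : ℝ) + 1) / (L : ℝ))) :
    ∃ l, ∀ ε : ℝ, 0 < ε →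
      (epsRank (W l) ε : ℝ) ≤
        (2 / ε ^ 2) * Real.rpow (B / Real.sqrt 2) ((2 * k : ℝ) / (L : ℝ)) *
          (((L : ℝ) + 1) / (L : ℝ)) * opNorm (W l) ^ 2 :=
  exists_bottleneck_layer_class_general hkL m n W hW B hB hHM
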